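/- arXiv:2201.01942 — 4 statements merged into one kernel-verified Lean document; each statement's English description precedes it below -/
import Mathlib

section
/- Suppose the conditional distributions in the direction A→B are invariant between the two joint distributions, i.e. P1 a b / P1_A(a) = P2 a b / P2_A(a) for all a, b, and suppose the conditional distributions in the direction B→A differ somewhere, i.e. there exist a, b with P1 a b / P1_B(b) ≠ P2 a b / P2_B(b). Then D_{A→B}(P2 ‖ P1) = 0 and the directionality score S_{D_KL} = D_{B→A}(P2 ‖ P1) − D_{A→B}(P2 ‖ P1) is strictly positive. -/
open Finset

noncomputable section

variable {α β : Type*}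

/-- A-marginal of a joint distribution. -/
def margA [Fintype β] (P : α → β → ℝ) (a : α) : ℝ := ∑ b, P a b

/-- B-marginal of a joint distribution. -/
def margB [Fintype α] (P : α → β → ℝ) (b : β) : ℝ := ∑ a, P a b

/-- Conditional entropy H_{A→B}(P). -/
def condEntAB [Fintype α] [Fintype β] (P : α → β → ℝ) : ℝ :=
  -∑ a, ∑ b, P a b * Real.log (P a b / margA P a)

/-- Conditional entropy H_{B→A}(P). -/
def condEntBA [Fintype α] [Fintype β] (P : α → β → ℝ) : ℝ :=
  -∑ a, ∑ b, P a b * Real.log (P a b / margB P b)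

/-- Conditional cross-entropy CE_{A→B}(P2, P1). -/
def crossEntAB [Fintype α] [Fintype β] (P2 P1 : α → β → ℝ) : ℝ :=
  -∑ a, ∑ b, P2 a b * Real.log (P1 a b / margA P1 a)

/-- Conditional cross-entropy CE_{B→A}(P2, P1). -/
def crossEntBA [Fintype α] [Fintype β] (P2 P1 : α → β → ℝ) : ℝ :=
  -∑ a, ∑ b, P2 a b * Real.log (P1 a b / margB P1 b)

/-- Conditional KL divergence D_{A→B}(P2 ‖ P1). -/
def klAB [Fintype α] [Fintype β] (P2 P1 : α → β → ℝ) : ℝ :=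
  ∑ a, ∑ b, P2 a b * Real.log ((P2 a b / margA P2 a) / (P1 a b / margA P1 a))

/-- Conditional KL divergence D_{B→A}(P2 ‖ P1). -/
def klBA [Fintype α] [Fintype β] (P2 P1 : α → β → ℝ) : ℝ :=
  ∑ a, ∑ b, P2 a b * Real.log ((P2 a b / margB P2 b) / (P1 a b / margB P1 b))

/-- Generalization gap G_{A→B}. -/
def gapAB [Fintype α] [Fintype β] (P2 P1 : α → β → ℝ) : ℝ :=
  crossEntAB P2 P1 - condEntAB P1

/-- Generalization gap G_{B→A}. -/
def gapBA [Fintype α] [Fintype β] (P2 P1 : α → β → ℝ) : ℝ :=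
  crossEntBA P2 P1 - condEntBA P1

/-- Joint entropy H(P). -/
def jointEnt [Fintype α] [Fintype β] (P : α → β → ℝ) : ℝ :=
  -∑ a, ∑ b, P a b * Real.log (P a b)

/-- Entropy of the A-marginal. -/
def entA [Fintype α] [Fintype β] (P : α → β → ℝ) : ℝ :=
  -∑ a, margA P a * Real.log (margA P a)

/-- Entropy of the B-marginal. -/
def entB [Fintype α] [Fintype β] (P : α → β → ℝ) : ℝ :=
  -∑ b, margB P b * Real.log (margB P b)

private lemma gibbs_aux {γ : Type*} [Fintype γ] (p q : γ → ℝ)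
    (hp : ∀ i, 0 < p i) (hq : ∀ i, 0 < q i)
    (hsum : ∑ i, q i = ∑ i, p i) (i0 : γ) (hne : p i0 ≠ q i0) :
    0 < ∑ i, p i * Real.log (p i / q i) := by
  have key : ∀ i : γ, p i - q i ≤ p i * Real.log (p i / q i) := by
    intro i
    have h1 : Real.log (q i / p i) ≤ q i / p i - 1 :=
      Real.log_le_sub_one_of_pos (div_pos (hq i) (hp i))
    have h2 : Real.log (p i / q i) = -Real.log (q i / p i) := by
      rw [← Real.log_inv, inv_div]
    rw [h2]
    have := mul_le_mul_of_nonneg_left h1 (hp i).le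
    have h3 : p i * (q i / p i - 1) = q i - p i := by
      field_simp [(hp i).ne']
    nlinarith
  have keystrict : p i0 - q i0 < p i0 * Real.log (p i0 / q i0) := by
    have h1 : Real.log (q i0 / p i0) < q i0 / p i0 - 1 :=
      Real.log_lt_sub_one_of_pos (div_pos (hq i0) (hp i0))
        (by
          intro h
          rw [div_eq_one_iff_eq (hp i0).ne'] at h
          exact hne h.symm)
    have h2 : Real.log (p i0 / q i0) = -Real.log (q i0 / p i0) := by
      rw [← Real.log_inv, inv_div]
    rw [h2]
    have := mul_lt_mul_of_pos_left h1 (hp i0)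
    have h3 : p i0 * (q i0 / p i0 - 1) = q i0 - p i0 := by
      field_simp [(hp i0).ne']
    nlinarith
  have hlt : ∑ i, (p i - q i) < ∑ i, p i * Real.log (p i / q i) :=
    Finset.sum_lt_sum (fun i _ => key i) ⟨i0, Finset.mem_univ i0, keystrict⟩
  have : ∑ i, (p i - q i) = 0 := by
    rw [Finset.sum_sub_distrib, hsum, sub_self]
  linarith

/-- If the A→B conditionals are invariant and the B→A conditionals differ somewhere,
then D_{A→B}(P2 ‖ P1) = 0 and the directionality score
S_{D_KL} = D_{B→A}(P2 ‖ P1) − D_{A→B}(P2 ‖ P1) is strictly positive. -/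
theorem stmt_0 [Fintype α] [Fintype β] [Nonempty α] [Nonempty β]
    (P1 P2 : α → β → ℝ)
    (h1pos : ∀ a b, 0 < P1 a b) (h2pos : ∀ a b, 0 < P2 a b)
    (h1sum : ∑ a, ∑ b, P1 a b = 1) (h2sum : ∑ a, ∑ b, P2 a b = 1)
    (hinv : ∀ a b, P1 a b / margA P1 a = P2 a b / margA P2 a)
    (hdiff : ∃ a b, P1 a b / margB P1 b ≠ P2 a b / margB P2 b) :
    klAB P2 P1 = 0 ∧ 0 < klBA P2 P1 - klAB P2 P1 := by

  classical
  have h1A : ∀ a, 0 < margA P1 a := fun a =>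
    Finset.sum_pos (fun b _ => h1pos a b) Finset.univ_nonempty
  have h2A : ∀ a, 0 < margA P2 a := fun a =>
    Finset.sum_pos (fun b _ => h2pos a b) Finset.univ_nonempty
  have h1B : ∀ b, 0 < margB P1 b := fun b =>
    Finset.sum_pos (fun a _ => h1pos a b) Finset.univ_nonempty
  have h2B : ∀ b, 0 < margB P2 b := fun b =>
    Finset.sum_pos (fun a _ => h2pos a b) Finset.univ_nonempty
  have hAB : klAB P2 P1 = 0 := by
    unfold klAB
    apply Finset.sum_eq_zero; intro a _
    apply Finset.sum_eq_zero; intro b _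
    rw [hinv a b, div_self (div_pos (h2pos a b) (h2A a)).ne', Real.log_one, mul_zero]
  refine ⟨hAB, ?_⟩
  rw [hAB, sub_zero]
  set q : α → β → ℝ := fun a b => margB P2 b * (P1 a b / margB P1 b) with hqdef
  have hklBA : klBA P2 P1 = ∑ x : α × β, P2 x.1 x.2 * Real.log (P2 x.1 x.2 / q x.1 x.2) := by
    rw [Fintype.sum_prod_type]
    unfold klBA
    apply Finset.sum_congr rfl; intro a _
    apply Finset.sum_congr rfl; intro b _
    congr 2
    have hb1 := (h1B b).ne'
    have hb2 := (h2B b).ne'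
    have hp := (h1pos a b).ne'
    rw [hqdef]
    field_simp
  have hqsum : ∑ x : α × β, q x.1 x.2 = ∑ x : α × β, P2 x.1 x.2 := by
    rw [Fintype.sum_prod_type, Fintype.sum_prod_type]
    have hL : ∑ a, ∑ b, q a b = ∑ b, margB P2 b := by
      rw [Finset.sum_comm]
      apply Finset.sum_congr rfl; intro b _
      simp only [hqdef]
      rw [← Finset.mul_sum, ← Finset.sum_div]
      have : ∑ a, P1 a b = margB P1 b := rfl
      rw [this, div_self (h1B b).ne', mul_one]
    rw [hL]
    simp only [margB]
    rw [Finset.sum_comm]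
  obtain ⟨a0, b0, hne⟩ := hdiff
  have hne' : P2 a0 b0 ≠ q a0 b0 := by
    intro h
    apply hne
    simp only [hqdef] at h
    rw [h, mul_div_cancel_left₀ _ (h2B b0).ne']
  rw [hklBA]
  exact gibbs_aux (fun x => P2 x.1 x.2) (fun x => q x.1 x.2)
    (fun x => h2pos x.1 x.2)
    (fun x => mul_pos (h2B x.2) (div_pos (h1pos x.1 x.2) (h1B x.2)))
    hqsum (a0, b0) hne'
end
end

section
/- For any two joint distributions P1 and P2 on α × β, the generalization-gap directionality score satisfies S_G = S_{D_KL} − [(H(P2_B) − H(P1_B)) − (H(P2_A) − H(P1_A))], where S_G = G_{B→A} − G_{A→B} and S_{D_KL} = D_{B→A}(P2 ‖ P1) − D_{A→B}(P2 ‖ P1); that is, the difference of generalization gaps is the difference of conditional KL divergences biased by the difference of marginal-entropy changes. -/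
open Finset

noncomputable section

variable {α β : Type*}

lemma margA_pos' [Fintype β] [Nonempty β] (P : α → β → ℝ) (h : ∀ a b, 0 < P a b) (a : α) :
    0 < margA P a := Finset.sum_pos (fun b _ => h a b) univ_nonempty

lemma margB_pos' [Fintype α] [Nonempty α] (P : α → β → ℝ) (h : ∀ a b, 0 < P a b) (b : β) :
    0 < margB P b := Finset.sum_pos (fun a _ => h a b) univ_nonempty

lemma condAB_eq' [Fintype α] [Fintype β] [Nonempty β] (P : α → β → ℝ)
    (h : ∀ a b, 0 < P a b) : condEntAB P = jointEnt P - entA P := by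
  unfold condEntAB jointEnt entA
  have key : ∀ a b, P a b * Real.log (P a b / margA P a)
      = P a b * Real.log (P a b) - P a b * Real.log (margA P a) := by
    intro a b
    rw [Real.log_div (h a b).ne' (margA_pos' P h a).ne', mul_sub]
  simp_rw [key, Finset.sum_sub_distrib, ← Finset.sum_mul]
  unfold margA
  ring

lemma condBA_eq' [Fintype α] [Fintype β] [Nonempty α] (P : α → β → ℝ)
    (h : ∀ a b, 0 < P a b) : condEntBA P = jointEnt P - entB P := by
  unfold condEntBA jointEnt entB
  have key : ∀ a b, P a b * Real.log (P a b / margB P b)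
      = P a b * Real.log (P a b) - P a b * Real.log (margB P b) := by
    intro a b
    rw [Real.log_div (h a b).ne' (margB_pos' P h b).ne', mul_sub]
  simp_rw [key, Finset.sum_sub_distrib]
  rw [Finset.sum_comm (f := fun a b => P a b * Real.log (margB P b))]
  simp_rw [← Finset.sum_mul]
  unfold margB
  ring

lemma klAB_eq' [Fintype α] [Fintype β] [Nonempty β] (P1 P2 : α → β → ℝ)
    (h1 : ∀ a b, 0 < P1 a b) (h2 : ∀ a b, 0 < P2 a b) :
    klAB P2 P1 = crossEntAB P2 P1 - condEntAB P2 := by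
  unfold klAB crossEntAB condEntAB
  have key : ∀ a b, Real.log ((P2 a b / margA P2 a) / (P1 a b / margA P1 a))
      = Real.log (P2 a b / margA P2 a) - Real.log (P1 a b / margA P1 a) := fun a b =>
    Real.log_div (div_pos (h2 a b) (margA_pos' P2 h2 a)).ne'
      (div_pos (h1 a b) (margA_pos' P1 h1 a)).ne'
  simp_rw [key, mul_sub, Finset.sum_sub_distrib]
  ring

lemma klBA_eq' [Fintype α] [Fintype β] [Nonempty α] (P1 P2 : α → β → ℝ)
    (h1 : ∀ a b, 0 < P1 a b) (h2 : ∀ a b, 0 < P2 a b) :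
    klBA P2 P1 = crossEntBA P2 P1 - condEntBA P2 := by
  unfold klBA crossEntBA condEntBA
  have key : ∀ a b, Real.log ((P2 a b / margB P2 b) / (P1 a b / margB P1 b))
      = Real.log (P2 a b / margB P2 b) - Real.log (P1 a b / margB P1 b) := fun a b =>
    Real.log_div (div_pos (h2 a b) (margB_pos' P2 h2 b)).ne'
      (div_pos (h1 a b) (margB_pos' P1 h1 b)).ne'
  simp_rw [key, mul_sub, Finset.sum_sub_distrib]
  ring

/-- S_G = S_{D_KL} − [(H(P2_B) − H(P1_B)) − (H(P2_A) − H(P1_A))]. -/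
theorem stmt_6 [Fintype α] [Fintype β] [Nonempty α] [Nonempty β]
    (P1 P2 : α → β → ℝ)
    (h1pos : ∀ a b, 0 < P1 a b) (h2pos : ∀ a b, 0 < P2 a b)
    (h1sum : ∑ a, ∑ b, P1 a b = 1) (h2sum : ∑ a, ∑ b, P2 a b = 1) :
    gapBA P2 P1 - gapAB P2 P1 =
      (klBA P2 P1 - klAB P2 P1) -
        ((entB P2 - entB P1) - (entA P2 - entA P1)) := by
  have e1 := condAB_eq' P1 h1pos
  have e2 := condAB_eq' P2 h2pos
  have e3 := condBA_eq' P1 h1pos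
  have e4 := condBA_eq' P2 h2pos
  have e5 := klAB_eq' P1 P2 h1pos h2pos
  have e6 := klBA_eq' P1 P2 h1pos h2pos
  unfold gapAB gapBA
  rw [e5, e6]
  have hA1 : entA P1 = jointEnt P1 - condEntAB P1 := by rw [e1]; ring
  have hA2 : entA P2 = jointEnt P2 - condEntAB P2 := by rw [e2]; ring
  have hB1 : entB P1 = jointEnt P1 - condEntBA P1 := by rw [e3]; ring
  have hB2 : entB P2 = jointEnt P2 - condEntBA P2 := by rw [e4]; ring
  rw [hA1, hA2, hB1, hB2]
  ring
end
end

section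
/- Suppose the conditional distributions in the direction A→B are invariant between the two joint distributions, i.e. P1 a b / P1_A(a) = P2 a b / P2_A(a) for all a, b; suppose the changes in marginal entropies coincide, H(P2_A) − H(P1_A) = H(P2_B) − H(P1_B); and suppose there exist a, b with P1 a b / P1_B(b) ≠ P2 a b / P2_B(b). Then the generalization-gap directionality score S_G = G_{B→A} − G_{A→B} is strictly positive, so it correctly identifies the causal direction A→B. -/
open Finset

noncomputable section

variable {α β : Type*}

lemma my_key_le (x y : ℝ) (hx : 0 < x) (hy : 0 < y) :
    x - y ≤ x * Real.log (x / y) := by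
  have h1 : Real.log (y / x) ≤ y / x - 1 :=
    Real.log_le_sub_one_of_pos (div_pos hy hx)
  have h2 : Real.log (x / y) = - Real.log (y / x) := by
    rw [← Real.log_inv]; congr 1; field_simp
  have h3 : x * Real.log (y / x) ≤ x * (y / x - 1) :=
    mul_le_mul_of_nonneg_left h1 hx.le
  have h4 : x * (y / x - 1) = y - x := by field_simp
  rw [h2]; linarith

lemma my_key_lt (x y : ℝ) (hx : 0 < x) (hy : 0 < y) (hne : x ≠ y) :
    x - y < x * Real.log (x / y) := by
  have hne1 : y / x ≠ 1 := by
    intro h; exact hne ((div_eq_one_iff_eq hx.ne').mp h).symm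
  have h1 : Real.log (y / x) < y / x - 1 :=
    Real.log_lt_sub_one_of_pos (div_pos hy hx) hne1
  have h2 : Real.log (x / y) = - Real.log (y / x) := by
    rw [← Real.log_inv]; congr 1; field_simp
  have h3 : x * Real.log (y / x) < x * (y / x - 1) :=
    mul_lt_mul_of_pos_left h1 hx
  have h4 : x * (y / x - 1) = y - x := by field_simp
  rw [h2]; linarith

lemma my_gibbs_le {ι : Type*} [Fintype ι] (f g : ι → ℝ) (hf : ∀ i, 0 < f i)
    (hg : ∀ i, 0 < g i) (hsum : ∑ i, f i = ∑ i, g i) :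
    0 ≤ ∑ i, f i * Real.log (f i / g i) :=
  calc (0:ℝ) = ∑ i, (f i - g i) := by rw [Finset.sum_sub_distrib, hsum]; ring
  _ ≤ _ := Finset.sum_le_sum fun i _ => my_key_le _ _ (hf i) (hg i)

lemma my_gibbs_lt {ι : Type*} [Fintype ι] (f g : ι → ℝ) (hf : ∀ i, 0 < f i)
    (hg : ∀ i, 0 < g i) (hsum : ∑ i, f i = ∑ i, g i)
    (i0 : ι) (hne : f i0 ≠ g i0) :
    0 < ∑ i, f i * Real.log (f i / g i) :=
  calc (0:ℝ) = ∑ i, (f i - g i) := by rw [Finset.sum_sub_distrib, hsum]; ring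
  _ < _ := Finset.sum_lt_sum (fun i _ => my_key_le _ _ (hf i) (hg i))
      ⟨i0, Finset.mem_univ i0, my_key_lt _ _ (hf i0) (hg i0) hne⟩

lemma my_klBA_eq [Fintype α] [Fintype β] (P2 P1 : α → β → ℝ)
    (h1pos : ∀ a b, 0 < P1 a b) (h2pos : ∀ a b, 0 < P2 a b)
    (hB1 : ∀ b, 0 < margB P1 b) (hB2 : ∀ b, 0 < margB P2 b) :
    klBA P2 P1 = crossEntBA P2 P1 - condEntBA P2 := by
  unfold klBA crossEntBA condEntBA
  have h : ∀ a b, P2 a b * Real.log ((P2 a b / margB P2 b) / (P1 a b / margB P1 b)) =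
      P2 a b * Real.log (P2 a b / margB P2 b) - P2 a b * Real.log (P1 a b / margB P1 b) := by
    intro a b
    rw [Real.log_div (ne_of_gt (div_pos (h2pos a b) (hB2 b)))
      (ne_of_gt (div_pos (h1pos a b) (hB1 b)))]
    ring
  simp_rw [h, Finset.sum_sub_distrib]
  ring

lemma my_klAB_eq [Fintype α] [Fintype β] (P2 P1 : α → β → ℝ)
    (h1pos : ∀ a b, 0 < P1 a b) (h2pos : ∀ a b, 0 < P2 a b)
    (hA1 : ∀ a, 0 < margA P1 a) (hA2 : ∀ a, 0 < margA P2 a) :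
    klAB P2 P1 = crossEntAB P2 P1 - condEntAB P2 := by
  unfold klAB crossEntAB condEntAB
  have h : ∀ a b, P2 a b * Real.log ((P2 a b / margA P2 a) / (P1 a b / margA P1 a)) =
      P2 a b * Real.log (P2 a b / margA P2 a) - P2 a b * Real.log (P1 a b / margA P1 a) := by
    intro a b
    rw [Real.log_div (ne_of_gt (div_pos (h2pos a b) (hA2 a)))
      (ne_of_gt (div_pos (h1pos a b) (hA1 a)))]
    ring
  simp_rw [h, Finset.sum_sub_distrib]
  ring

lemma my_cond_diff [Fintype α] [Fintype β] (P : α → β → ℝ)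
    (hpos : ∀ a b, 0 < P a b) (hA : ∀ a, 0 < margA P a) (hB : ∀ b, 0 < margB P b) :
    condEntBA P - condEntAB P = entA P - entB P := by
  unfold condEntBA condEntAB entA entB
  have h : ∀ a b, P a b * Real.log (P a b / margA P a) - P a b * Real.log (P a b / margB P b)
      = P a b * Real.log (margB P b) - P a b * Real.log (margA P a) := by
    intro a b
    rw [Real.log_div (hpos a b).ne' (hA a).ne', Real.log_div (hpos a b).ne' (hB b).ne']
    ring
  have key : ∑ a, ∑ b, P a b * Real.log (P a b / margA P a)
      - ∑ a, ∑ b, P a b * Real.log (P a b / margB P b)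
      = ∑ a, ∑ b, P a b * Real.log (margB P b)
        - ∑ a, ∑ b, P a b * Real.log (margA P a) := by
    simp_rw [← Finset.sum_sub_distrib, h]
  have e1 : ∑ a, ∑ b, P a b * Real.log (margA P a)
      = ∑ a, margA P a * Real.log (margA P a) := by
    refine Finset.sum_congr rfl fun a _ => ?_
    simp [margA, Finset.sum_mul]
  have e2 : ∑ a, ∑ b, P a b * Real.log (margB P b)
      = ∑ b, margB P b * Real.log (margB P b) := by
    rw [Finset.sum_comm]
    refine Finset.sum_congr rfl fun b _ => ?_
    simp [margB, Finset.sum_mul]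
  linarith

/-- If the A→B conditionals are invariant, the marginal-entropy changes coincide,
and the B→A conditionals differ somewhere, then S_G = G_{B→A} − G_{A→B} > 0. -/
theorem stmt_8 [Fintype α] [Fintype β] [Nonempty α] [Nonempty β]
    (P1 P2 : α → β → ℝ)
    (h1pos : ∀ a b, 0 < P1 a b) (h2pos : ∀ a b, 0 < P2 a b)
    (h1sum : ∑ a, ∑ b, P1 a b = 1) (h2sum : ∑ a, ∑ b, P2 a b = 1)
    (hinv : ∀ a b, P1 a b / margA P1 a = P2 a b / margA P2 a)
    (hent : entA P2 - entA P1 = entB P2 - entB P1)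
    (hdiff : ∃ a b, P1 a b / margB P1 b ≠ P2 a b / margB P2 b) :
    0 < gapBA P2 P1 - gapAB P2 P1 := by
  have hA1 : ∀ a, 0 < margA P1 a := fun a => Finset.sum_pos (fun b _ => h1pos a b) Finset.univ_nonempty
  have hA2 : ∀ a, 0 < margA P2 a := fun a => Finset.sum_pos (fun b _ => h2pos a b) Finset.univ_nonempty
  have hB1 : ∀ b, 0 < margB P1 b := fun b => Finset.sum_pos (fun a _ => h1pos a b) Finset.univ_nonempty
  have hB2 : ∀ b, 0 < margB P2 b := fun b => Finset.sum_pos (fun a _ => h2pos a b) Finset.univ_nonempty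
  -- klAB vanishes by invariance
  have hklAB : klAB P2 P1 = 0 := by
    unfold klAB
    refine Finset.sum_eq_zero fun a _ => Finset.sum_eq_zero fun b _ => ?_
    rw [hinv a b, div_self (ne_of_gt (div_pos (h2pos a b) (hA2 a))), Real.log_one, mul_zero]
  -- klBA is positive
  obtain ⟨a0, b0, hne⟩ := hdiff
  have hklBA : 0 < klBA P2 P1 := by
    have hswap : klBA P2 P1 = ∑ b, ∑ a, P2 a b *
        Real.log ((P2 a b / margB P2 b) / (P1 a b / margB P1 b)) := by
      unfold klBA; exact Finset.sum_comm
    rw [hswap]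
    have inner : ∀ b : β, ∑ a, P2 a b * Real.log ((P2 a b / margB P2 b) / (P1 a b / margB P1 b))
        = margB P2 b * ∑ a, (P2 a b / margB P2 b) *
            Real.log ((P2 a b / margB P2 b) / (P1 a b / margB P1 b)) := by
      intro b
      rw [Finset.mul_sum]
      refine Finset.sum_congr rfl fun a _ => ?_
      rw [← mul_assoc, mul_div_cancel₀ _ (hB2 b).ne']
    have hsum1 : ∀ b : β, ∑ a, P2 a b / margB P2 b = 1 := by
      intro b; rw [← Finset.sum_div]; exact div_self (hB2 b).ne'
    have hsum2 : ∀ b : β, ∑ a, P1 a b / margB P1 b = 1 := by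
      intro b; rw [← Finset.sum_div]; exact div_self (hB1 b).ne'
    have hnn : ∀ b : β, 0 ≤ ∑ a, P2 a b * Real.log ((P2 a b / margB P2 b) / (P1 a b / margB P1 b)) := by
      intro b
      rw [inner b]
      refine mul_nonneg (hB2 b).le ?_
      exact my_gibbs_le _ _ (fun a => div_pos (h2pos a b) (hB2 b))
        (fun a => div_pos (h1pos a b) (hB1 b)) (by rw [hsum1 b, hsum2 b])
    have hpos0 : 0 < ∑ a, P2 a b0 * Real.log ((P2 a b0 / margB P2 b0) / (P1 a b0 / margB P1 b0)) := by
      rw [inner b0]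
      refine mul_pos (hB2 b0) ?_
      exact my_gibbs_lt _ _ (fun a => div_pos (h2pos a b0) (hB2 b0))
        (fun a => div_pos (h1pos a b0) (hB1 b0)) (by rw [hsum1 b0, hsum2 b0]) a0 (Ne.symm hne)
    exact Finset.sum_pos' (fun b _ => hnn b) ⟨b0, Finset.mem_univ b0, hpos0⟩
  have eBA := my_klBA_eq P2 P1 h1pos h2pos hB1 hB2
  have eAB := my_klAB_eq P2 P1 h1pos h2pos hA1 hA2
  have d1 := my_cond_diff P1 h1pos hA1 hB1
  have d2 := my_cond_diff P2 h2pos hA2 hB2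
  unfold gapBA gapAB
  linarith
end
end

section
/- Suppose the conditional distributions in the direction A→B are invariant between the two joint distributions, i.e. P1 a b / P1_A(a) = P2 a b / P2_A(a) for all a, b. Then the generalization gap in the correct direction equals the change in conditional entropy: G_{A→B} = H_{A→B}(P2) − H_{A→B}(P1). -/
open Finset

noncomputable section

variable {α β : Type*}

/-- Under invariance of the A→B conditionals,
G_{A→B} = H_{A→B}(P2) − H_{A→B}(P1). -/
theorem stmt_9 [Fintype α] [Fintype β] [Nonempty α] [Nonempty β]
    (P1 P2 : α → β → ℝ)
    (h1pos : ∀ a b, 0 < P1 a b) (h2pos : ∀ a b, 0 < P2 a b)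
    (h1sum : ∑ a, ∑ b, P1 a b = 1) (h2sum : ∑ a, ∑ b, P2 a b = 1)
    (hinv : ∀ a b, P1 a b / margA P1 a = P2 a b / margA P2 a) :
    gapAB P2 P1 = condEntAB P2 - condEntAB P1 := by
  have : crossEntAB P2 P1 = condEntAB P2 := by
    unfold crossEntAB condEntAB
    congr 1
    apply Finset.sum_congr rfl; intro a _
    apply Finset.sum_congr rfl; intro b _
    rw [hinv a b]
  rw [gapAB, this]
end
end
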